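/- Let G = (V,E) be a finite simple connected graph of order n ≥ 2. Then β₀(S(G)) ≤ n + β₀*(G). -/

import Mathlib

/-- A finset `S` is independent in `G` if no two of its vertices are adjacent. -/
def IsIndepFinset {V : Type*} (G : SimpleGraph V) (S : Finset V) : Prop :=
  ∀ u ∈ S, ∀ v ∈ S, ¬ G.Adj u v

open Classical in
/-- The neighborhood `N(S)` of a finset `S` in `G`: all vertices adjacent to some vertex of `S`. -/
noncomputable def nbhdSet {V : Type*} [Fintype V] (G : SimpleGraph V) (S : Finset V) : Finset V :=
  Finset.univ.filter fun v => ∃ u ∈ S, G.Adj u v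

/-- The independence number `β₀(G)`: maximum size of an independent set. -/
noncomputable def indepNum {V : Type*} [Fintype V] (G : SimpleGraph V) : ℕ :=
  sSup {k : ℕ | ∃ S : Finset V, IsIndepFinset G S ∧ S.card = k}

/-- A finset `C` is a vertex cover of `G` if it meets every edge. -/
def IsVertexCover {V : Type*} (G : SimpleGraph V) (C : Finset V) : Prop :=
  ∀ u v, G.Adj u v → u ∈ C ∨ v ∈ C

/-- The vertex cover number `α₀(G)`: minimum size of a vertex cover. -/
noncomputable def coverNum {V : Type*} [Fintype V] (G : SimpleGraph V) : ℕ :=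
  sInf {k : ℕ | ∃ C : Finset V, IsVertexCover G C ∧ C.card = k}

/-- `β₀*(G) = max {|S| - |N(S)| : S independent in G}`. -/
noncomputable def betaStar {V : Type*} [Fintype V] (G : SimpleGraph V) : ℤ :=
  sSup {k : ℤ | ∃ S : Finset V,
    IsIndepFinset G S ∧ k = (S.card : ℤ) - ((nbhdSet G S).card : ℤ)}

/-- The splitting graph `S(G)`: vertex set `V ⊔ V'`, with the edges of `G` together with an
edge between the copy `v'` of `v` and `u` for every edge `vu` of `G`. -/
def splittingGraph {V : Type*} (G : SimpleGraph V) : SimpleGraph (V ⊕ V) where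
  Adj x y :=
    match x, y with
    | Sum.inl a, Sum.inl b => G.Adj a b
    | Sum.inl a, Sum.inr b => G.Adj a b
    | Sum.inr a, Sum.inl b => G.Adj a b
    | Sum.inr _, Sum.inr _ => False
  symm := by
    constructor
    rintro (a | a) (b | b) h
    · exact G.adj_symm h
    · exact G.adj_symm h
    · exact G.adj_symm h
    · exact h
  loopless := by
    constructor
    rintro (a | a) h
    · exact G.loopless.irrefl a h
    · exact h

/-!
An independent set `I` of `S(G)` splits as `A ⊔ B'` with `A, B ⊆ V`. Its trace `A` on `V` is
independent in `G`, and since `u ∈ A` is adjacent in `S(G)` to `v'` for every neighbour `v` of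
`u`, the set `B` avoids `N(A)`. Hence `|I| = |A| + |B| ≤ |A| + (n - |N(A)|) ≤ n + β₀*(G)`.
-/

lemma IsIndepFinset.toLeft_of_splittingGraph {V : Type*} {G : SimpleGraph V}
    {I : Finset (V ⊕ V)} (hI : IsIndepFinset (splittingGraph G) I) :
    IsIndepFinset G I.toLeft := fun u hu v hv =>
  hI (.inl u) (Finset.mem_toLeft.1 hu) (.inl v) (Finset.mem_toLeft.1 hv)

section

variable {V : Type*} [Fintype V] (G : SimpleGraph V)

lemma mem_nbhdSet {S : Finset V} {v : V} : v ∈ nbhdSet G S ↔ ∃ u ∈ S, G.Adj u v := by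
  simp [nbhdSet]

lemma exists_isIndepFinset_card_eq_indepNum :
    ∃ S : Finset V, IsIndepFinset G S ∧ S.card = indepNum G := by
  refine Nat.sSup_mem (s := {k | ∃ S : Finset V, IsIndepFinset G S ∧ S.card = k})
    ⟨0, ∅, by simp [IsIndepFinset], rfl⟩ ⟨Fintype.card V, ?_⟩
  rintro k ⟨S, -, rfl⟩
  exact S.card_le_univ

lemma card_sub_card_nbhdSet_le_betaStar {S : Finset V} (hS : IsIndepFinset G S) :
    (S.card : ℤ) - (nbhdSet G S).card ≤ betaStar G := by
  refine le_csSup ⟨Fintype.card V, ?_⟩ ⟨S, hS, rfl⟩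
  rintro k ⟨T, -, rfl⟩
  have : (T.card : ℤ) ≤ Fintype.card V := mod_cast T.card_le_univ
  omega

variable {G} {I : Finset (V ⊕ V)}

lemma IsIndepFinset.disjoint_toRight_nbhdSet_toLeft
    (hI : IsIndepFinset (splittingGraph G) I) : Disjoint I.toRight (nbhdSet G I.toLeft) := by
  rw [Finset.disjoint_right]
  intro v hv hvI
  obtain ⟨u, hu, huv⟩ := (mem_nbhdSet G).1 hv
  exact hI (.inl u) (Finset.mem_toLeft.1 hu) (.inr v) (Finset.mem_toRight.1 hvI) huv

lemma IsIndepFinset.card_le_card_add_betaStar (hI : IsIndepFinset (splittingGraph G) I) :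
    (I.card : ℤ) ≤ Fintype.card V + betaStar G := by
  classical
  have hA := card_sub_card_nbhdSet_le_betaStar G hI.toLeft_of_splittingGraph
  have hB : I.toRight.card + (nbhdSet G I.toLeft).card ≤ Fintype.card V := by
    rw [← Finset.card_union_of_disjoint hI.disjoint_toRight_nbhdSet_toLeft]
    exact Finset.card_le_univ _
  have hI_card : I.toLeft.card + I.toRight.card = I.card := Finset.card_toLeft_add_card_toRight
  omega

end

theorem stmt15_general {V : Type*} [Fintype V] (G : SimpleGraph V) :
    (indepNum (splittingGraph G) : ℤ) ≤ (Fintype.card V : ℤ) + betaStar G := by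
  obtain ⟨I, hI, hcard⟩ := exists_isIndepFinset_card_eq_indepNum (splittingGraph G)
  rw [← hcard]
  exact hI.card_le_card_add_betaStar

theorem stmt15 {V : Type*} [Fintype V] (G : SimpleGraph V)
    (hconn : G.Connected) (hn : 2 ≤ Fintype.card V) :
    (indepNum (splittingGraph G) : ℤ) ≤ (Fintype.card V : ℤ) + betaStar G :=
  stmt15_general G
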